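/- Let K ⊆ ℝ^d be a nonempty compact set, let k ≥ 2, and let p = (p_1, ..., p_k) : K → ℝ^k be continuous with p_i(x) > 0 for all i and ∑_{i=1}^k p_i(x) = 1 for all x ∈ K. Let D be a set of continuous functions from K to ℝ that is dense in the sup norm (for every continuous φ : K → ℝ and every δ > 0 there exists θ ∈ D with sup_{x∈K} |θ(x) − φ(x)| < δ). Then for every ε > 0 there exist θ_1, ..., θ_{k-1} ∈ D such that the PUNN partition functions h_1, ..., h_k built from the sigmoid gates g_i(x) = 1/(1 + exp(-θ_i(x))) satisfy max_{1≤i≤k} sup_{x∈K} |h_i(x) − p_i(x)| < ε. -/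

import Mathlib

/-!
Write `T_i = p_i + ⋯ + p_k` for the tail sums of `p`, so `T_1 = 1`. The stick-breaking gates
`G_j = p_j / T_j` reproduce `p` exactly: `1 - G_j = T_{j+1} / T_j`, so
`∏_{j<i} (1 - G_j)` telescopes to `T_i`, and `h_i = T_i G_i = p_i`. Since all `p_j > 0`, each
`G_j = σ(log p_j - log T_{j+1})` is the sigmoid of a continuous function, which `D` approximates
uniformly within `δ`. The sigmoid is 1-Lipschitz, and a product of factors in `[0, 1]` moves by
at most the sum of the moves of its factors, so every `h_i` moves by at most `(k - 1) δ`.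
-/

/-- PUNN partition functions: given `k` and gates `g 1, …, g (k-1) : X → ℝ`, define
`h 1 = g 1`, `h i = (∏_{j=1}^{i-1} (1 - g j)) * g i` for `2 ≤ i ≤ k-1`, and
`h k = ∏_{j=1}^{k-1} (1 - g j)`. -/
noncomputable def punnH {X : Type*} (k : ℕ) (g : ℕ → X → ℝ) (i : ℕ) (x : X) : ℝ :=
  if i = k then ∏ j ∈ Finset.Ico 1 k, (1 - g j x)
  else (∏ j ∈ Finset.Ico 1 i, (1 - g j x)) * g i x

open Finset Real

lemma abs_sigmoid_sub_sigmoid_le (a b : ℝ) : |sigmoid a - sigmoid b| ≤ |a - b| := by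
  have hlip : LipschitzWith 1 sigmoid :=
    lipschitzWith_of_nnnorm_deriv_le differentiable_sigmoid fun x => by
      have h0 := sigmoid_pos x
      have h1 := sigmoid_lt_one x
      rw [deriv_sigmoid, ← NNReal.coe_le_coe, coe_nnnorm, Real.norm_eq_abs, NNReal.coe_one,
        abs_le]
      constructor <;> nlinarith
  simpa [Real.dist_eq] using hlip.dist_le_mul a b

lemma sigmoid_log_sub_log {a b : ℝ} (ha : 0 < a) (hb : 0 < b) :
    sigmoid (log a - log b) = a / (a + b) := by
  rw [sigmoid_def, neg_sub, exp_sub, exp_log ha, exp_log hb]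
  field_simp

section UnitInterval

open unitInterval

lemma abs_mul_sub_mul_le_of_mem_unitInterval {a b c d : ℝ} (ha : a ∈ I) (hd : d ∈ I) :
    |a * b - c * d| ≤ |a - c| + |b - d| :=
  calc |a * b - c * d| = |a * (b - d) + (a - c) * d| := by ring_nf
    _ ≤ |a| * |b - d| + |a - c| * |d| := by
        rw [← abs_mul, ← abs_mul]; exact abs_add_le _ _
    _ ≤ 1 * |b - d| + |a - c| * 1 := by
        gcongr
        · exact (abs_of_nonneg ha.1).le.trans ha.2
        · exact (abs_of_nonneg hd.1).le.trans hd.2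
    _ = |a - c| + |b - d| := by ring

lemma abs_prod_sub_prod_le_of_mem_unitInterval {ι : Type*} (s : Finset ι) {a b : ι → ℝ}
    (ha : ∀ j ∈ s, a j ∈ I) (hb : ∀ j ∈ s, b j ∈ I) :
    |∏ j ∈ s, a j - ∏ j ∈ s, b j| ≤ ∑ j ∈ s, |a j - b j| := by
  classical
  induction s using Finset.induction_on with
  | empty => simp
  | insert i s hi ih =>
    rw [prod_insert hi, prod_insert hi, sum_insert hi]
    have hb' : ∀ j ∈ s, b j ∈ I := fun j hj => hb j (mem_insert_of_mem hj)
    calc _ ≤ |a i - b i| + |∏ j ∈ s, a j - ∏ j ∈ s, b j| :=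
          abs_mul_sub_mul_le_of_mem_unitInterval (ha i (mem_insert_self i s))
            (unitInterval.prod_mem hb')
      _ ≤ |a i - b i| + ∑ j ∈ s, |a j - b j| :=
          add_le_add_right (ih (fun j hj => ha j (mem_insert_of_mem hj)) hb') _

end UnitInterval

lemma abs_punnH_sub_punnH_le {X : Type*} {k i : ℕ} {g G : ℕ → X → ℝ} {x : X}
    (hg : ∀ j ∈ Ico 1 k, g j x ∈ unitInterval) (hG : ∀ j ∈ Ico 1 k, G j x ∈ unitInterval)
    (hi : i ∈ Icc 1 k) :
    |punnH k g i x - punnH k G i x| ≤ ∑ j ∈ Ico 1 k, |g j x - G j x| := by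
  have one_sub_mem : ∀ f : ℕ → X → ℝ, (∀ j ∈ Ico 1 k, f j x ∈ unitInterval) →
      ∀ j ∈ Ico 1 k, 1 - f j x ∈ unitInterval :=
    fun f hf j hj => Set.Icc.mem_iff_one_sub_mem.mp (hf j hj)
  have hprod := abs_prod_sub_prod_le_of_mem_unitInterval (Ico 1 i) (a := fun j => 1 - g j x)
    (b := fun j => 1 - G j x)
  simp only [sub_sub_sub_cancel_left, abs_sub_comm (G _ x)] at hprod
  rw [mem_Icc] at hi
  by_cases hik : i = k
  · subst hik
    simpa [punnH] using hprod (one_sub_mem g hg) (one_sub_mem G hG)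
  · have hsub : Ico 1 i ⊆ Ico 1 k := Ico_subset_Ico_right hi.2
    have hi' : i ∈ Ico 1 k := mem_Ico.mpr ⟨hi.1, by omega⟩
    simp only [punnH, if_neg hik]
    calc _ ≤ |∏ j ∈ Ico 1 i, (1 - g j x) - ∏ j ∈ Ico 1 i, (1 - G j x)| + |g i x - G i x| :=
          abs_mul_sub_mul_le_of_mem_unitInterval
            (unitInterval.prod_mem fun j hj => one_sub_mem g hg j (hsub hj)) (hG i hi')
      _ ≤ ∑ j ∈ Ico 1 i, |g j x - G j x| + |g i x - G i x| :=
          add_le_add_left (hprod (fun j hj => one_sub_mem g hg j (hsub hj))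
            (fun j hj => one_sub_mem G hG j (hsub hj))) _
      _ = ∑ j ∈ Ico 1 (i + 1), |g j x - G j x| := (sum_Ico_succ_top hi.1 _).symm
      _ ≤ ∑ j ∈ Ico 1 k, |g j x - G j x| :=
          sum_le_sum_of_subset_of_nonneg (Ico_subset_Ico_right (by omega))
            fun _ _ _ => abs_nonneg _

section StickBreaking

variable {X : Type*} {k i j : ℕ} {p : ℕ → X → ℝ} {x : X}

def tailSum (k : ℕ) (p : ℕ → X → ℝ) (i : ℕ) (x : X) : ℝ := ∑ j ∈ Icc i k, p j x

noncomputable def stickBreakingGate (k : ℕ) (p : ℕ → X → ℝ) (j : ℕ) (x : X) : ℝ :=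
  p j x / tailSum k p j x

noncomputable def stickBreakingLogit (k : ℕ) (p : ℕ → X → ℝ) (j : ℕ) (x : X) : ℝ :=
  log (p j x) - log (tailSum k p (j + 1) x)

lemma tailSum_eq_add (hik : i ≤ k) : tailSum k p i x = p i x + tailSum k p (i + 1) x := by
  rw [tailSum, tailSum, ← insert_Icc_add_one_left_eq_Icc hik, sum_insert (by simp)]

lemma tailSum_pos (hp : ∀ j ∈ Icc 1 k, 0 < p j x) (hi : 1 ≤ i) (hik : i ≤ k) :
    0 < tailSum k p i x :=
  sum_pos (fun j hj => hp j (Icc_subset_Icc_left hi hj)) (nonempty_Icc.mpr hik)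

lemma prod_one_sub_stickBreakingGate (hp : ∀ j ∈ Icc 1 k, 0 < p j x) (hi : 1 ≤ i)
    (hik : i ≤ k) :
    ∏ j ∈ Ico 1 i, (1 - stickBreakingGate k p j x) = tailSum k p i x / tailSum k p 1 x := by
  induction i, hi using Nat.le_induction with
  | base => simp [(tailSum_pos hp le_rfl hik).ne']
  | succ n hn ih =>
    have hTn := tailSum_pos hp hn (by omega)
    rw [tailSum_eq_add (by omega)] at hTn
    rw [prod_Ico_succ_top hn, ih (by omega), stickBreakingGate, tailSum_eq_add (by omega)]
    field_simp
    ring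

lemma punnH_stickBreakingGate (hp : ∀ j ∈ Icc 1 k, 0 < p j x) (hi : i ∈ Icc 1 k) :
    punnH k (stickBreakingGate k p) i x = p i x / tailSum k p 1 x := by
  rw [mem_Icc] at hi
  have hTi := tailSum_pos hp hi.1 hi.2
  by_cases hik : i = k
  · subst hik
    rw [punnH, if_pos rfl, prod_one_sub_stickBreakingGate hp hi.1 le_rfl, tailSum, Icc_self,
      sum_singleton]
  · rw [punnH, if_neg hik, prod_one_sub_stickBreakingGate hp hi.1 hi.2, stickBreakingGate]
    field_simp

lemma stickBreakingGate_mem_unitInterval (hp : ∀ j ∈ Icc 1 k, 0 < p j x) (hj : j ∈ Ico 1 k) :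
    stickBreakingGate k p j x ∈ unitInterval := by
  rw [mem_Ico] at hj
  rw [stickBreakingGate, tailSum_eq_add (p := p) hj.2.le]
  have hpj := hp j (mem_Icc.mpr ⟨hj.1, hj.2.le⟩)
  have hT := tailSum_pos hp (by omega : 1 ≤ j + 1) hj.2
  exact unitInterval.div_mem hpj.le (by linarith) (by linarith)

lemma sigmoid_stickBreakingLogit (hp : ∀ j ∈ Icc 1 k, 0 < p j x) (hj : j ∈ Ico 1 k) :
    sigmoid (stickBreakingLogit k p j x) = stickBreakingGate k p j x := by
  rw [mem_Ico] at hj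
  rw [stickBreakingLogit, sigmoid_log_sub_log (hp j (mem_Icc.mpr ⟨hj.1, hj.2.le⟩))
    (tailSum_pos hp (by omega) hj.2), stickBreakingGate, tailSum_eq_add hj.2.le]

lemma continuousOn_stickBreakingLogit [TopologicalSpace X] {K : Set X}
    (hp_cont : ∀ j ∈ Icc 1 k, ContinuousOn (p j) K) (hp_pos : ∀ j ∈ Icc 1 k, ∀ x ∈ K, 0 < p j x)
    (hj : j ∈ Ico 1 k) : ContinuousOn (stickBreakingLogit k p j) K := by
  rw [mem_Ico] at hj
  have hsub : Icc (j + 1) k ⊆ Icc 1 k := Icc_subset_Icc_left (by omega)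
  refine ContinuousOn.sub (.log (hp_cont j (mem_Icc.mpr ⟨hj.1, hj.2.le⟩)) fun x hx => ?_)
    (.log (continuousOn_finsetSum _ fun l hl => hp_cont l (hsub hl)) fun x hx => ?_)
  · exact (hp_pos j (mem_Icc.mpr ⟨hj.1, hj.2.le⟩) x hx).ne'
  · exact (tailSum_pos (fun l hl => hp_pos l hl x hx) (by omega) hj.2).ne'

lemma abs_punnH_sigmoid_sub_le (θ : ℕ → X → ℝ) (hp : ∀ j ∈ Icc 1 k, 0 < p j x)
    (hp_sum : ∑ j ∈ Icc 1 k, p j x = 1) (hi : i ∈ Icc 1 k) :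
    |punnH k (fun j y => sigmoid (θ j y)) i x - p i x| ≤
      ∑ j ∈ Ico 1 k, |θ j x - stickBreakingLogit k p j x| := by
  have hp_eq : p i x = punnH k (stickBreakingGate k p) i x := by
    rw [punnH_stickBreakingGate hp hi, tailSum, hp_sum, div_one]
  calc _ ≤ ∑ j ∈ Ico 1 k, |sigmoid (θ j x) - stickBreakingGate k p j x| := by
        rw [hp_eq]
        exact abs_punnH_sub_punnH_le (fun j _ => ⟨(sigmoid_pos _).le, sigmoid_le_one _⟩)
          (fun j hj => stickBreakingGate_mem_unitInterval hp hj) hi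
    _ ≤ ∑ j ∈ Ico 1 k, |θ j x - stickBreakingLogit k p j x| := sum_le_sum fun j hj => by
        rw [← sigmoid_stickBreakingLogit hp hj]
        exact abs_sigmoid_sub_sigmoid_le _ _

end StickBreaking

section Approximation

variable {X : Type*} [TopologicalSpace X] {K : Set X}

lemma le_biSup_of_isCompact (hK : IsCompact K) {f : X → ℝ} (hf : ContinuousOn f K) {x : X}
    (hx : x ∈ K) : f x ≤ ⨆ y ∈ K, f y :=
  le_ciSup₂ (f := fun y (_ : y ∈ K) => f y)
    ((hK.bddAbove_image hf).mono (by rintro _ ⟨_, ⟨y, rfl⟩, ⟨hy, rfl⟩⟩; exact ⟨y, hy, rfl⟩)) x hx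

lemma exists_forall_abs_sub_lt_of_dense {ι : Type*} (hK : IsCompact K) {D : Set (X → ℝ)}
    (hD_cont : ∀ f ∈ D, ContinuousOn f K)
    (hD_dense : ∀ φ : X → ℝ, ContinuousOn φ K → ∀ δ > 0, ∃ θ ∈ D, (⨆ x ∈ K, |θ x - φ x|) < δ)
    {s : Set ι} {φ : ι → X → ℝ} (hφ : ∀ j ∈ s, ContinuousOn (φ j) K) {δ : ℝ} (hδ : 0 < δ) :
    ∃ θ : ι → X → ℝ, ∀ j ∈ s, θ j ∈ D ∧ ∀ x ∈ K, |θ j x - φ j x| < δ := by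
  have h : ∀ j, ∃ θj : X → ℝ, j ∈ s → θj ∈ D ∧ ∀ x ∈ K, |θj x - φ j x| < δ := by
    intro j
    by_cases hj : j ∈ s
    · obtain ⟨θj, hθD, hθδ⟩ := hD_dense (φ j) (hφ j hj) δ hδ
      have hcont : ContinuousOn (fun x => |θj x - φ j x|) K :=
        ((hD_cont θj hθD).sub (hφ j hj)).abs
      exact ⟨θj, fun _ => ⟨hθD, fun x hx => (le_biSup_of_isCompact hK hcont hx).trans_lt hθδ⟩⟩
    · exact ⟨0, fun h => absurd h hj⟩
  choose θ hθ using h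
  exact ⟨θ, hθ⟩

end Approximation

theorem punn_density_sigmoid_general (d k : ℕ)
    (K : Set (EuclideanSpace ℝ (Fin d))) (hK : IsCompact K)
    (p : ℕ → EuclideanSpace ℝ (Fin d) → ℝ)
    (hp_cont : ∀ i ∈ Finset.Icc 1 k, ContinuousOn (p i) K)
    (hp_pos : ∀ i ∈ Finset.Icc 1 k, ∀ x ∈ K, 0 < p i x)
    (hp_sum : ∀ x ∈ K, ∑ i ∈ Finset.Icc 1 k, p i x = 1)
    (D : Set (EuclideanSpace ℝ (Fin d) → ℝ))
    (hD_cont : ∀ f ∈ D, ContinuousOn f K)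
    (hD_dense : ∀ φ : EuclideanSpace ℝ (Fin d) → ℝ, ContinuousOn φ K →
      ∀ δ > 0, ∃ θ ∈ D, (⨆ x ∈ K, |θ x - φ x|) < δ) :
    ∀ ε > 0, ∃ θ : ℕ → EuclideanSpace ℝ (Fin d) → ℝ,
      (∀ i ∈ Finset.Icc 1 (k - 1), θ i ∈ D) ∧
      ∀ i ∈ Finset.Icc 1 k,
        (⨆ x ∈ K,
          |punnH k (fun j y => 1 / (1 + Real.exp (-(θ j y)))) i x - p i x|) < ε := by
  intro ε hε
  have hδ : 0 < ε / (k + 1) := by positivity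
  obtain ⟨θ, hθ⟩ := exists_forall_abs_sub_lt_of_dense hK hD_cont hD_dense
    (s := ↑(Ico 1 k)) (φ := stickBreakingLogit k p)
    (fun j hj => continuousOn_stickBreakingLogit hp_cont hp_pos (mem_coe.mp hj)) hδ
  have hIcc : Icc 1 (k - 1) = Ico 1 k := by ext; simp only [mem_Icc, mem_Ico]; omega
  refine ⟨θ, fun i hi => (hθ i (hIcc ▸ hi)).1, fun i hi => ?_⟩
  have hbound : ∀ x ∈ K,
      |punnH k (fun j y => sigmoid (θ j y)) i x - p i x| ≤ k * (ε / (k + 1)) := fun x hx =>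
    calc _ ≤ ∑ j ∈ Ico 1 k, |θ j x - stickBreakingLogit k p j x| :=
          abs_punnH_sigmoid_sub_le θ (fun j hj => hp_pos j hj x hx) (hp_sum x hx) hi
      _ ≤ ∑ _j ∈ Ico 1 k, ε / (k + 1) := sum_le_sum fun j hj => ((hθ j hj).2 x hx).le
      _ ≤ k * (ε / (k + 1)) := by
          rw [sum_const, Nat.card_Ico, nsmul_eq_mul]
          gcongr
          exact_mod_cast Nat.sub_le k 1
  simp only [one_div, ← sigmoid_def]
  have hδ₀ : 0 ≤ k * (ε / (k + 1)) := by positivity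
  refine (Real.iSup_le (fun x => Real.iSup_le (hbound x) hδ₀) hδ₀).trans_lt ?_
  rw [mul_div_assoc', div_lt_iff₀ (by positivity)]
  linarith

/-- Density of PUNN with sigmoid gates: for a nonempty compact `K ⊆ ℝ^d`, a
continuous probability map `p : K → ri(Δ^{k-1})`, and a sup-norm-dense class `D`
of continuous functions on `K`, for every `ε > 0` there exist `θ 1, …, θ (k-1)`
in `D` such that the PUNN partition functions built from the sigmoid gates
`g i x = 1 / (1 + exp (−θ i x))` are uniformly `ε`-close to `p` on `K`. -/
theorem punn_density_sigmoid (d k : ℕ) (hk : 2 ≤ k)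
    (K : Set (EuclideanSpace ℝ (Fin d))) (hK : IsCompact K) (hne : K.Nonempty)
    (p : ℕ → EuclideanSpace ℝ (Fin d) → ℝ)
    (hp_cont : ∀ i ∈ Finset.Icc 1 k, ContinuousOn (p i) K)
    (hp_pos : ∀ i ∈ Finset.Icc 1 k, ∀ x ∈ K, 0 < p i x)
    (hp_sum : ∀ x ∈ K, ∑ i ∈ Finset.Icc 1 k, p i x = 1)
    (D : Set (EuclideanSpace ℝ (Fin d) → ℝ))
    (hD_cont : ∀ f ∈ D, ContinuousOn f K)
    (hD_dense : ∀ φ : EuclideanSpace ℝ (Fin d) → ℝ, ContinuousOn φ K →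
      ∀ δ > 0, ∃ θ ∈ D, (⨆ x ∈ K, |θ x - φ x|) < δ) :
    ∀ ε > 0, ∃ θ : ℕ → EuclideanSpace ℝ (Fin d) → ℝ,
      (∀ i ∈ Finset.Icc 1 (k - 1), θ i ∈ D) ∧
      ∀ i ∈ Finset.Icc 1 k,
        (⨆ x ∈ K,
          |punnH k (fun j y => 1 / (1 + Real.exp (-(θ j y)))) i x - p i x|) < ε :=
  punn_density_sigmoid_general d k K hK p hp_cont hp_pos hp_sum D hD_cont hD_dense
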